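/- In the badcodeword construction: for every e ∈ C_max \ C, ⟨ψ2, XZ(e)ψ2⟩ = 0. -/

import Mathlib

open scoped BigOperators
open Matrix

/-- `omg p` is the complex primitive `p`-th root of unity `exp(2πi/p)`. -/
noncomputable def omg (p : ℕ) : ℂ := Complex.exp (2 * Real.pi * Complex.I / p)

/-- The generalized Pauli matrix `XZ(u) = X^{a_1}Z^{b_1} ⊗ ⋯ ⊗ X^{a_n}Z^{b_n}`
for `u = ((a_1,b_1),…,(a_n,b_n)) ∈ (Z_p²)ⁿ`, written out entrywise with respect to the
computational basis of `(ℂ^p)^{⊗n} ≃ ℂ^{p^n}`, whose coordinates are indexed by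
`Fin n → ZMod p`.  (It is the matrix determined by
`XZ(u) |i₁ … iₙ⟩ = ∏_t ω^{b_t i_t} |i₁+a₁, …, iₙ+aₙ⟩`.) -/
noncomputable def XZ (p n : ℕ) (u : Fin n → ZMod p × ZMod p) :
    Matrix (Fin n → ZMod p) (Fin n → ZMod p) ℂ :=
  fun j i => ∏ t : Fin n, if j t = i t + (u t).1 then omg p ^ ((u t).2 * i t).val else 0

/-- The symplectic inner product `⟨u,v⟩ = Σ b_i c_i − a_i d_i` on `Z_p^{2n}`. -/
def symp (p n : ℕ) (u v : Fin n → ZMod p × ZMod p) : ZMod p :=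
  ∑ t : Fin n, ((u t).2 * (v t).1 - (u t).1 * (v t).2)

/-- The standard Hermitian inner product on `I → ℂ`. -/
noncomputable def cinner {I : Type*} [Fintype I] (x y : I → ℂ) : ℂ :=
  ∑ i, (starRingEnd ℂ) (x i) * y i

/-!
For `x, y ∈ R` the operator `XZ(x)* XZ(e) XZ(y)` is a phase times `XZ(e + y - x)`. If `x ≠ y`
then `e + y - x ∉ C_max`, so some element of `C_max` fails to commute with it and its
expectation in the stabilizer state `ψ1` vanishes; if `x = y` it is `ω^⟨e,x⟩ XZ(e)`. Hence
`⟨ψ2, XZ(e)ψ2⟩ = p^{-k} ⟨ψ1, XZ(e)ψ1⟩ ∑_{x ∈ R} ω^⟨e,x⟩`. Since `e ∉ C = (C^⊥)^⊥`, some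
`z ∈ C^⊥` has `⟨e,z⟩ ≠ 0`, and the character sum vanishes because translation by `z` permutes
`R` modulo `C_max`.
-/

open ZMod (stdAddChar)

lemma AddChar.map_sum_eq_prod {A M ι : Type*} [AddCommMonoid A] [CommMonoid M]
    (ψ : AddChar A M) (s : Finset ι) (f : ι → A) : ψ (∑ i ∈ s, f i) = ∏ i ∈ s, ψ (f i) := by
  induction s using Finset.cons_induction with
  | empty => simp
  | cons a s ha ih => rw [Finset.sum_cons, Finset.prod_cons, ψ.map_add_eq_mul, ih]

/-- Translation by `z` permutes the transversal `T` modulo `M` and multiplies the sum by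
`ψ z ≠ 1`. -/
lemma AddChar.sum_transversal_eq_zero {G R : Type*} [AddCommGroup G] [CommRing R]
    [NoZeroDivisors R] (ψ : AddChar G R) {S M : AddSubgroup G} {T : Finset G}
    (hTS : ∀ x ∈ T, x ∈ S) (hT : ∀ v ∈ S, ∃! x, x ∈ T ∧ v - x ∈ M)
    (hψM : ∀ m ∈ M, ψ m = 1) {z : G} (hz : z ∈ S) (hψz : ψ z ≠ 1) :
    ∑ x ∈ T, ψ x = 0 := by
  choose! rep hrepT hrepM using fun v hv => (hT v hv).exists
  have rep_eq : ∀ v ∈ S, ∀ x ∈ T, v - x ∈ M → rep v = x := fun v hv x hx hvx =>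
    (hT v hv).unique ⟨hrepT v hv, hrepM v hv⟩ ⟨hx, hvx⟩
  have hshift : ∑ x ∈ T, ψ x = ∑ x ∈ T, ψ (x + z) := by
    refine Finset.sum_nbij' (fun x => rep (x - z)) (fun x => rep (x + z)) ?_ ?_ ?_ ?_ ?_
    · exact fun x hx => hrepT _ (S.sub_mem (hTS x hx) hz)
    · exact fun x hx => hrepT _ (S.add_mem (hTS x hx) hz)
    · intro x hx
      have hxz := S.sub_mem (hTS x hx) hz
      refine rep_eq _ (S.add_mem (hTS _ (hrepT _ hxz)) hz) x hx ?_
      convert M.neg_mem (hrepM _ hxz) using 1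
      abel
    · intro x hx
      have hxz := S.add_mem (hTS x hx) hz
      refine rep_eq _ (S.sub_mem (hTS _ (hrepT _ hxz)) hz) x hx ?_
      convert M.neg_mem (hrepM _ hxz) using 1
      abel
    · intro x hx
      have hxz := S.sub_mem (hTS x hx) hz
      have hrep : ψ (rep (x - z)) = ψ (x - z) := by
        rw [← sub_add_cancel (x - z) (rep (x - z)), ψ.map_add_eq_mul, hψM _ (hrepM _ hxz),
          one_mul, sub_add_cancel]
      rw [ψ.map_add_eq_mul, hrep, ← ψ.map_add_eq_mul, sub_add_cancel]
  have hfix : (∑ x ∈ T, ψ x) * (ψ z - 1) = 0 := by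
    rw [mul_sub, mul_one, Finset.sum_mul, hshift]
    simp only [ψ.map_add_eq_mul, sub_self]
  exact (mul_eq_zero.mp hfix).resolve_right (sub_ne_zero.mpr hψz)

section Hermitian

variable {I : Type*} [Fintype I]

lemma cinner_eq_star_dotProduct (x y : I → ℂ) : cinner x y = star x ⬝ᵥ y := rfl

lemma cinner_smul_left (a : ℂ) (x y : I → ℂ) :
    cinner (a • x) y = starRingEnd ℂ a * cinner x y := by
  simp only [cinner_eq_star_dotProduct, star_smul, smul_dotProduct, smul_eq_mul]
  rfl

lemma cinner_smul_right (a : ℂ) (x y : I → ℂ) : cinner x (a • y) = a * cinner x y := by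
  simp only [cinner_eq_star_dotProduct, dotProduct_smul, smul_eq_mul]

lemma cinner_sum_left {ι : Type*} (s : Finset ι) (x : ι → I → ℂ) (y : I → ℂ) :
    cinner (∑ i ∈ s, x i) y = ∑ i ∈ s, cinner (x i) y := by
  simp only [cinner_eq_star_dotProduct, star_sum, sum_dotProduct]

lemma cinner_sum_right {ι : Type*} (s : Finset ι) (x : I → ℂ) (y : ι → I → ℂ) :
    cinner x (∑ i ∈ s, y i) = ∑ i ∈ s, cinner x (y i) := by
  simp only [cinner_eq_star_dotProduct, dotProduct_sum]

end Hermitian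

section Pauli

variable {p n : ℕ}

/-- For `u = (a|b)`, `xPart u = a` and `zPart u = b`. -/
def xPart (u : Fin n → ZMod p × ZMod p) : Fin n → ZMod p := fun t => (u t).1

def zPart (u : Fin n → ZMod p × ZMod p) : Fin n → ZMod p := fun t => (u t).2

lemma xPart_add (u v : Fin n → ZMod p × ZMod p) : xPart (u + v) = xPart u + xPart v := rfl

lemma zPart_add (u v : Fin n → ZMod p × ZMod p) : zPart (u + v) = zPart u + zPart v := rfl

lemma xPart_smul (a : ZMod p) (u : Fin n → ZMod p × ZMod p) : xPart (a • u) = a • xPart u := rfl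

lemma zPart_smul (a : ZMod p) (u : Fin n → ZMod p × ZMod p) : zPart (a • u) = a • zPart u := rfl

lemma symp_eq_dotProduct (u v : Fin n → ZMod p × ZMod p) :
    symp p n u v = zPart u ⬝ᵥ xPart v - xPart u ⬝ᵥ zPart v :=
  Finset.sum_sub_distrib _ _

section Symplectic

variable (p n)

noncomputable def sympForm : LinearMap.BilinForm (ZMod p) (Fin n → ZMod p × ZMod p) :=
  LinearMap.mk₂ (ZMod p) (symp p n)
    (fun u v w => by
      simp only [symp_eq_dotProduct, xPart_add, zPart_add, add_dotProduct]; ring)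
    (fun a u w => by
      simp only [symp_eq_dotProduct, xPart_smul, zPart_smul, smul_dotProduct, smul_eq_mul]; ring)
    (fun u v w => by
      simp only [symp_eq_dotProduct, xPart_add, zPart_add, dotProduct_add]; ring)
    (fun a u w => by
      simp only [symp_eq_dotProduct, xPart_smul, zPart_smul, dotProduct_smul, smul_eq_mul]; ring)

lemma sympForm_apply (u v : Fin n → ZMod p × ZMod p) : sympForm p n u v = symp p n u v := rfl

lemma sympForm_isAlt : (sympForm p n).IsAlt := fun u => by
  simp only [sympForm_apply, symp, mul_comm, sub_self, Finset.sum_const_zero]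

lemma sympForm_nondegenerate : (sympForm p n).Nondegenerate := by
  refine (sympForm_isAlt p n).isRefl.nondegenerate_iff_separatingLeft.mpr fun c hc => ?_
  ext t
  · simpa [sympForm_apply, symp, Pi.single_apply, apply_ite] using hc (Pi.single t (0, 1))
  · simpa [sympForm_apply, symp, Pi.single_apply, apply_ite] using hc (Pi.single t (1, 0))

end Symplectic

lemma exists_mem_orthogonal_symp_ne_zero [Fact p.Prime]
    {C : Submodule (ZMod p) (Fin n → ZMod p × ZMod p)}
    {e : Fin n → ZMod p × ZMod p} (he : e ∉ C) :
    ∃ z ∈ (sympForm p n).orthogonal C, symp p n e z ≠ 0 := by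
  by_contra! h
  refine he ?_
  rw [← LinearMap.BilinForm.orthogonal_orthogonal (sympForm_nondegenerate p n)
    (sympForm_isAlt p n).isRefl C]
  exact fun z hz => (sympForm_isAlt p n).eq_iff.mp (h z hz)

/-- `XZ(u) XZ(v) = ω^{pauliCocycle u v} XZ(u + v)`. -/
def pauliCocycle (u v : Fin n → ZMod p × ZMod p) : ZMod p := zPart u ⬝ᵥ xPart v

lemma symp_eq_pauliCocycle_sub (u v : Fin n → ZMod p × ZMod p) :
    symp p n u v = pauliCocycle u v - pauliCocycle v u := by
  rw [symp_eq_dotProduct, pauliCocycle, pauliCocycle, dotProduct_comm (xPart u)]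

variable [NeZero p]

lemma omg_pow_val (m : ZMod p) : omg p ^ m.val = stdAddChar m := by
  rw [ZMod.stdAddChar_apply, ZMod.toCircle_apply, omg, ← Complex.exp_nat_mul]
  congr 1
  ring

lemma stdAddChar_eq_one_iff {a : ZMod p} : stdAddChar a = 1 ↔ a = 0 := by
  rw [← AddChar.map_zero_eq_one (stdAddChar (N := p)), ZMod.injective_stdAddChar.eq_iff]

lemma conj_stdAddChar_mul_self (a : ZMod p) :
    starRingEnd ℂ (stdAddChar a) * stdAddChar a = 1 := by
  rw [← AddChar.map_neg_eq_conj, ← AddChar.map_add_eq_mul, neg_add_cancel,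
    AddChar.map_zero_eq_one]

lemma XZ_apply (u : Fin n → ZMod p × ZMod p) (j i : Fin n → ZMod p) :
    XZ p n u j i = if j = i + xPart u then stdAddChar (zPart u ⬝ᵥ i) else 0 := by
  simp only [XZ, omg_pow_val, Fintype.prod_ite_zero, funext_iff, Pi.add_apply, xPart]
  rw [← AddChar.map_sum_eq_prod]
  congr

lemma XZ_mulVec (u : Fin n → ZMod p × ZMod p) (ψ : (Fin n → ZMod p) → ℂ) :
    XZ p n u *ᵥ ψ = fun j => stdAddChar (zPart u ⬝ᵥ (j - xPart u)) * ψ (j - xPart u) := by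
  ext j
  rw [mulVec, dotProduct, Finset.sum_eq_single_of_mem (j - xPart u) (Finset.mem_univ _)]
  · rw [XZ_apply, if_pos (sub_add_cancel j _).symm]
  · intro i _ hi
    rw [XZ_apply, if_neg (fun h => hi (eq_sub_of_add_eq h.symm)), zero_mul]

lemma XZ_mulVec_XZ_mulVec (u v : Fin n → ZMod p × ZMod p) (ψ : (Fin n → ZMod p) → ℂ) :
    XZ p n u *ᵥ (XZ p n v *ᵥ ψ) = stdAddChar (pauliCocycle u v) • XZ p n (u + v) *ᵥ ψ := by
  ext j
  simp only [XZ_mulVec, Pi.smul_apply, smul_eq_mul, xPart_add, zPart_add, sub_sub,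
    ← mul_assoc, ← AddChar.map_add_eq_mul]
  congr 2
  simp only [pauliCocycle, add_dotProduct, dotProduct_sub, dotProduct_add]
  ring

lemma XZ_mulVec_comm (u v : Fin n → ZMod p × ZMod p) (ψ : (Fin n → ZMod p) → ℂ) :
    XZ p n u *ᵥ (XZ p n v *ᵥ ψ) = stdAddChar (symp p n u v) • XZ p n v *ᵥ (XZ p n u *ᵥ ψ) := by
  rw [XZ_mulVec_XZ_mulVec, XZ_mulVec_XZ_mulVec, smul_smul, ← AddChar.map_add_eq_mul,
    symp_eq_pauliCocycle_sub, sub_add_cancel, add_comm]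

lemma cinner_XZ_mulVec_XZ_mulVec (u : Fin n → ZMod p × ZMod p) (a b : (Fin n → ZMod p) → ℂ) :
    cinner (XZ p n u *ᵥ a) (XZ p n u *ᵥ b) = cinner a b := by
  simp only [cinner, XZ_mulVec]
  refine Fintype.sum_equiv (Equiv.subRight (xPart u)) _ _ fun j => ?_
  simp only [Equiv.subRight_apply, map_mul]
  linear_combination starRingEnd ℂ (a (j - xPart u)) * b (j - xPart u) *
    conj_stdAddChar_mul_self (zPart u ⬝ᵥ (j - xPart u))

lemma cinner_XZ_mulVec_left (x u : Fin n → ZMod p × ZMod p) (a b : (Fin n → ZMod p) → ℂ) :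
    cinner (XZ p n x *ᵥ a) (XZ p n u *ᵥ b)
      = stdAddChar (-pauliCocycle x (u - x)) * cinner a (XZ p n (u - x) *ᵥ b) := by
  have hu : XZ p n u *ᵥ b
      = stdAddChar (-pauliCocycle x (u - x)) • XZ p n x *ᵥ (XZ p n (u - x) *ᵥ b) := by
    rw [XZ_mulVec_XZ_mulVec, add_sub_cancel, smul_smul, ← AddChar.map_add_eq_mul,
      neg_add_cancel, AddChar.map_zero_eq_one, one_smul]
  rw [hu, cinner_smul_right, cinner_XZ_mulVec_XZ_mulVec]

lemma cinner_XZ_mulVec_XZ_mulVec_XZ_mulVec (x u y : Fin n → ZMod p × ZMod p)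
    (a b : (Fin n → ZMod p) → ℂ) :
    cinner (XZ p n x *ᵥ a) (XZ p n u *ᵥ (XZ p n y *ᵥ b))
      = stdAddChar (pauliCocycle u y - pauliCocycle x (u + y - x))
        * cinner a (XZ p n (u + y - x) *ᵥ b) := by
  rw [XZ_mulVec_XZ_mulVec, cinner_smul_right, cinner_XZ_mulVec_left, ← mul_assoc,
    ← AddChar.map_add_eq_mul, ← sub_eq_add_neg]

lemma cinner_XZ_mulVec_XZ_mulVec_XZ_mulVec_self (x u : Fin n → ZMod p × ZMod p)
    (a b : (Fin n → ZMod p) → ℂ) :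
    cinner (XZ p n x *ᵥ a) (XZ p n u *ᵥ (XZ p n x *ᵥ b))
      = stdAddChar (symp p n u x) * cinner a (XZ p n u *ᵥ b) := by
  rw [cinner_XZ_mulVec_XZ_mulVec_XZ_mulVec, add_sub_cancel_right, symp_eq_pauliCocycle_sub]

lemma cinner_XZ_mulVec_eq_zero_of_symp_ne_zero {ψ : (Fin n → ZMod p) → ℂ}
    {c u : Fin n → ZMod p × ZMod p} {lam : ℂ} (hψ : cinner ψ ψ = 1)
    (hc : XZ p n c *ᵥ ψ = lam • ψ) (hcu : symp p n c u ≠ 0) :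
    cinner ψ (XZ p n u *ᵥ ψ) = 0 := by
  have hlam : lam * starRingEnd ℂ lam = 1 := by
    simpa [hc, cinner_smul_left, cinner_smul_right, hψ] using cinner_XZ_mulVec_XZ_mulVec c ψ ψ
  -- conjugating by the stabilizer `XZ(c)` multiplies the expectation by `ω^{⟨c,u⟩} ≠ 1`
  have hphase : cinner ψ (XZ p n u *ᵥ ψ)
      = stdAddChar (symp p n c u) * cinner ψ (XZ p n u *ᵥ ψ) := calc
    _ = cinner (XZ p n c *ᵥ ψ) (XZ p n c *ᵥ (XZ p n u *ᵥ ψ)) :=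
      (cinner_XZ_mulVec_XZ_mulVec c ψ _).symm
    _ = starRingEnd ℂ lam * (stdAddChar (symp p n c u) * (lam * cinner ψ (XZ p n u *ᵥ ψ))) := by
      rw [XZ_mulVec_comm, hc, mulVec_smul, cinner_smul_left, cinner_smul_right,
        cinner_smul_right]
    _ = _ := by linear_combination stdAddChar (symp p n c u) * cinner ψ (XZ p n u *ᵥ ψ) * hlam
  have hne : stdAddChar (symp p n c u) ≠ 1 := mt stdAddChar_eq_one_iff.mp hcu
  have hzero : (stdAddChar (symp p n c u) - 1) * cinner ψ (XZ p n u *ᵥ ψ) = 0 := by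
    linear_combination -hphase
  exact (mul_eq_zero.mp hzero).resolve_left (sub_ne_zero.mpr hne)

end Pauli

theorem badcodeword_psi2_orth_general (p n k : ℕ) [Fact p.Prime]
    (C Cmax : Submodule (ZMod p) (Fin n → ZMod p × ZMod p))
    (hmax : ∀ u, u ∈ Cmax ↔ ∀ c ∈ Cmax, symp p n c u = 0)
    (ψ1 : (Fin n → ZMod p) → ℂ) (hψ1 : cinner ψ1 ψ1 = 1)
    (heig : ∀ c ∈ Cmax, ∃ lam : ℂ, XZ p n c *ᵥ ψ1 = lam • ψ1)
    (R : Finset (Fin n → ZMod p × ZMod p))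
    (hRsub : ∀ x ∈ R, ∀ c ∈ C, symp p n c x = 0)
    (hRrep : ∀ v : Fin n → ZMod p × ZMod p, (∀ c ∈ C, symp p n c v = 0) →
      ∃! x, x ∈ R ∧ v - x ∈ Cmax)
    (ψ2 : (Fin n → ZMod p) → ℂ)
    (hψ2 : ψ2 = ((Real.sqrt (p ^ k) : ℝ) : ℂ)⁻¹ • ∑ x ∈ R, XZ p n x *ᵥ ψ1)
    (e : Fin n → ZMod p × ZMod p) (heMax : e ∈ Cmax) (heC : e ∉ C) :
    cinner ψ2 (XZ p n e *ᵥ ψ2) = 0 := by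
  obtain ⟨z, hz, hez⟩ := exists_mem_orthogonal_symp_ne_zero heC
  have hchar : ∑ x ∈ R, stdAddChar (symp p n e x) = 0 :=
    (stdAddChar.compAddMonoidHom (sympForm p n e).toAddMonoidHom).sum_transversal_eq_zero
      (S := ((sympForm p n).orthogonal C).toAddSubgroup) (M := Cmax.toAddSubgroup)
      hRsub hRrep (fun m hm => by simp [sympForm_apply, (hmax m).mp hm e heMax]) hz
      (mt stdAddChar_eq_one_iff.mp hez)
  have hexp : ∀ u ∉ Cmax, cinner ψ1 (XZ p n u *ᵥ ψ1) = 0 := fun u hu => by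
    obtain ⟨c, hc, hcu⟩ : ∃ c ∈ Cmax, symp p n c u ≠ 0 := by
      by_contra! h
      exact hu ((hmax u).mpr h)
    obtain ⟨lam, hlam⟩ := heig c hc
    exact cinner_XZ_mulVec_eq_zero_of_symp_ne_zero hψ1 hlam hcu
  have hrow : ∀ x ∈ R, cinner (XZ p n x *ᵥ ψ1) (∑ y ∈ R, XZ p n e *ᵥ (XZ p n y *ᵥ ψ1))
      = stdAddChar (symp p n e x) * cinner ψ1 (XZ p n e *ᵥ ψ1) := fun x hx => by
    rw [cinner_sum_right, Finset.sum_eq_single_of_mem x hx fun y hy hyx => ?_,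
      cinner_XZ_mulVec_XZ_mulVec_XZ_mulVec_self]
    have hoff : e + y - x ∉ Cmax := fun hmem => hyx <| (hRrep y (hRsub y hy)).unique
      ⟨hy, by simp⟩ ⟨hx, by simpa [add_sub_assoc] using Cmax.sub_mem hmem heMax⟩
    rw [cinner_XZ_mulVec_XZ_mulVec_XZ_mulVec, hexp _ hoff, mul_zero]
  rw [hψ2, mulVec_smul, mulVec_sum, cinner_smul_left, cinner_smul_right, cinner_sum_left,
    Finset.sum_congr rfl hrow, ← Finset.sum_mul, hchar, zero_mul, mul_zero, mul_zero]

/-- In the badcodeword construction: for every `e ∈ C_max \ C`,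
`⟨ψ2, XZ(e)ψ2⟩ = 0`. -/
theorem badcodeword_psi2_orth (p n k : ℕ) [Fact p.Prime]
    (C Cmax : Submodule (ZMod p) (Fin n → ZMod p × ZMod p))
    (hkn : k ≤ n)
    (hdimC : Module.finrank (ZMod p) C = n - k)
    (hCself : ∀ u ∈ C, ∀ c ∈ C, symp p n c u = 0)
    (hCsub : C ≤ Cmax)
    (hsub : ∀ u ∈ Cmax, ∀ c ∈ C, symp p n c u = 0)
    (hmax : ∀ u, u ∈ Cmax ↔ ∀ c ∈ Cmax, symp p n c u = 0)
    (ψ1 : (Fin n → ZMod p) → ℂ) (hψ1 : cinner ψ1 ψ1 = 1)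
    (heig : ∀ c ∈ Cmax, ∃ lam : ℂ, XZ p n c *ᵥ ψ1 = lam • ψ1)
    (R : Finset (Fin n → ZMod p × ZMod p)) (h0R : 0 ∈ R)
    (hRsub : ∀ x ∈ R, ∀ c ∈ C, symp p n c x = 0)
    (hRrep : ∀ v : Fin n → ZMod p × ZMod p, (∀ c ∈ C, symp p n c v = 0) →
      ∃! x, x ∈ R ∧ v - x ∈ Cmax)
    (ψ2 : (Fin n → ZMod p) → ℂ)
    (hψ2 : ψ2 = ((Real.sqrt (p ^ k) : ℝ) : ℂ)⁻¹ • ∑ x ∈ R, XZ p n x *ᵥ ψ1)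
    (e : Fin n → ZMod p × ZMod p) (heMax : e ∈ Cmax) (heC : e ∉ C) :
    cinner ψ2 (XZ p n e *ᵥ ψ2) = 0 :=
  badcodeword_psi2_orth_general p n k C Cmax hmax ψ1 hψ1 heig R hRsub hRrep ψ2 hψ2 e heMax heC
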